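/- arXiv:q-alg/9708012 — 3 statements merged into one kernel-verified Lean document; each statement's English description precedes it below -/
import Mathlib

section
/- Let P : ℝ³ → ℝ³ be a smooth map, defining the bracket {f,g}_P(x) = ⟨P(x), ∇f(x) × ∇g(x)⟩ on smooth functions. Then the Jacobi identity {{f,g}_P,h}_P + {{g,h}_P,f}_P + {{h,f}_P,g}_P = 0 holds for all smooth f,g,h : ℝ³ → ℝ if and only if ⟨P(x), (curl P)(x)⟩ = 0 for all x ∈ ℝ³. -/
open scoped ContDiff

noncomputable section

/-- Partial derivative in the `i`-th coordinate direction. -/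
def pd (i : Fin 3) (f : (Fin 3 → ℝ) → ℝ) : (Fin 3 → ℝ) → ℝ :=
  fun x => fderiv ℝ f x (Pi.single i 1)

/-- Gradient of a function on ℝ³. -/
def grad (f : (Fin 3 → ℝ) → ℝ) (x : Fin 3 → ℝ) : Fin 3 → ℝ :=
  fun i => pd i f x

/-- Cross product on ℝ³. -/
def cross (u v : Fin 3 → ℝ) : Fin 3 → ℝ :=
  ![u 1 * v 2 - u 2 * v 1, u 2 * v 0 - u 0 * v 2, u 0 * v 1 - u 1 * v 0]

/-- Euclidean inner product on ℝ³. -/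
def dot (u v : Fin 3 → ℝ) : ℝ := ∑ i, u i * v i


/-- The curl of a vector field on ℝ³: `(curl P)_i = ∑ ε_{ijk} ∂_j P_k`. -/
def curl (P : (Fin 3 → ℝ) → (Fin 3 → ℝ)) (x : Fin 3 → ℝ) : Fin 3 → ℝ :=
  ![pd 1 (fun y => P y 2) x - pd 2 (fun y => P y 1) x,
    pd 2 (fun y => P y 0) x - pd 0 (fun y => P y 2) x,
    pd 0 (fun y => P y 1) x - pd 1 (fun y => P y 0) x]

/-- The bracket {f,g}_P(x) = ⟨P(x), ∇f(x) × ∇g(x)⟩ associated to a Poisson vector P. -/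
def pb (P : (Fin 3 → ℝ) → (Fin 3 → ℝ)) (f g : (Fin 3 → ℝ) → ℝ) : (Fin 3 → ℝ) → ℝ :=
  fun x => dot (P x) (cross (grad f x) (grad g x))

/-!
Differentiating `{f,g}_P` produces first derivatives of `P` and second derivatives of `f` and `g`.
In the cyclic sum the second derivatives of `f`, `g`, `h` cancel by symmetry of mixed partials,
and the derivatives of `P` assemble to `⟨P, curl P⟩ · det (∇f, ∇g, ∇h)`. Taking `f`, `g`, `h` to be
the coordinate functions makes the determinant `1`.
-/

section

variable {P : (Fin 3 → ℝ) → (Fin 3 → ℝ)} {f g : (Fin 3 → ℝ) → ℝ}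

theorem contDiff_pd (hf : ContDiff ℝ ∞ f) (i : Fin 3) : ContDiff ℝ ∞ (pd i f) :=
  (ContinuousLinearMap.apply ℝ ℝ (Pi.single i 1)).contDiff.comp (hf.fderiv_right le_rfl)

theorem pd_add {u v : (Fin 3 → ℝ) → ℝ} {x : Fin 3 → ℝ} (hu : DifferentiableAt ℝ u x)
    (hv : DifferentiableAt ℝ v x) (i : Fin 3) :
    pd i (fun y => u y + v y) x = pd i u x + pd i v x := by
  simp [pd, fderiv_fun_add hu hv]

theorem pd_sub {u v : (Fin 3 → ℝ) → ℝ} {x : Fin 3 → ℝ} (hu : DifferentiableAt ℝ u x)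
    (hv : DifferentiableAt ℝ v x) (i : Fin 3) :
    pd i (fun y => u y - v y) x = pd i u x - pd i v x := by
  simp [pd, fderiv_fun_sub hu hv]

theorem pd_mul {u v : (Fin 3 → ℝ) → ℝ} {x : Fin 3 → ℝ} (hu : DifferentiableAt ℝ u x)
    (hv : DifferentiableAt ℝ v x) (i : Fin 3) :
    pd i (fun y => u y * v y) x = pd i u x * v x + u x * pd i v x := by
  simp [pd, fderiv_fun_mul hu hv]; ring

theorem pd_pd_comm (hf : ContDiff ℝ ∞ f) (i j : Fin 3) (x : Fin 3 → ℝ) :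
    pd i (pd j f) x = pd j (pd i f) x := by
  have hsym : IsSymmSndFDerivAt ℝ f x :=
    hf.contDiffAt.isSymmSndFDerivAt (by rw [minSmoothness_of_isRCLikeNormedField]; norm_cast)
  have hd : DifferentiableAt ℝ (fderiv ℝ f) x :=
    ((hf.fderiv_right (m := ∞) le_rfl).differentiable (by simp)).differentiableAt
  change fderiv ℝ (fun y => fderiv ℝ f y (Pi.single j 1)) x (Pi.single i 1) =
    fderiv ℝ (fun y => fderiv ℝ f y (Pi.single i 1)) x (Pi.single j 1)
  rw [fderiv_clm_apply hd (differentiableAt_const _),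
    fderiv_clm_apply hd (differentiableAt_const _)]
  simpa using hsym _ _

theorem pd_pb (hP : ContDiff ℝ ∞ P) (hf : ContDiff ℝ ∞ f) (hg : ContDiff ℝ ∞ g)
    (i : Fin 3) (x : Fin 3 → ℝ) :
    pd i (pb P f g) x =
      pb (fun y k => pd i (fun z => P z k) y) f g x + pb P (pd i f) g x + pb P f (pd i g) x := by
  have hPk : ∀ k, Differentiable ℝ fun y => P y k :=
    differentiable_pi.1 (hP.differentiable (by simp))
  have hf' : ∀ j, Differentiable ℝ (pd j f) := fun j =>
    (contDiff_pd hf j).differentiable (by simp)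
  have hg' : ∀ j, Differentiable ℝ (pd j g) := fun j =>
    (contDiff_pd hg j).differentiable (by simp)
  unfold pb
  simp only [dot, cross, grad, Fin.sum_univ_three, Matrix.cons_val_zero,
    Matrix.cons_val_one, Matrix.cons_val_two, Matrix.head_cons, Matrix.tail_cons]
  simp (disch := fun_prop) only [pd_add, pd_sub, pd_mul]
  simp only [pd_pd_comm hf i, pd_pd_comm hg i]
  ring

theorem pb_apply (P : (Fin 3 → ℝ) → (Fin 3 → ℝ)) (u v : (Fin 3 → ℝ) → ℝ) (x : Fin 3 → ℝ) :
    pb P u v x = dot (P x) (cross (grad u x) (grad v x)) := rfl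

theorem pb_jacobiator_eq {h : (Fin 3 → ℝ) → ℝ} (hP : ContDiff ℝ ∞ P)
    (hf : ContDiff ℝ ∞ f) (hg : ContDiff ℝ ∞ g) (hh : ContDiff ℝ ∞ h) (x : Fin 3 → ℝ) :
    pb P (pb P f g) h x + pb P (pb P g h) f x + pb P (pb P h f) g x =
      dot (P x) (curl P x) * dot (grad f x) (cross (grad g x) (grad h x)) := by
  simp only [pb_apply, grad, pd_pb hP hf hg, pd_pb hP hg hh, pd_pb hP hh hf, dot, cross, curl,
    Fin.sum_univ_three, Matrix.cons_val_zero, Matrix.cons_val_one, Matrix.cons_val_two,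
    Matrix.head_cons, Matrix.tail_cons]
  -- once mixed partials are in a normal form, the second-derivative terms cancel
  simp only [pd_pd_comm hf 1 0, pd_pd_comm hf 2 0, pd_pd_comm hf 2 1,
    pd_pd_comm hg 1 0, pd_pd_comm hg 2 0, pd_pd_comm hg 2 1,
    pd_pd_comm hh 1 0, pd_pd_comm hh 2 0, pd_pd_comm hh 2 1]
  ring

theorem grad_eval (j : Fin 3) (x : Fin 3 → ℝ) : grad (fun y => y j) x = Pi.single j 1 := by
  ext i
  simp [grad, pd, (hasFDerivAt_apply j x).fderiv, Pi.single_apply, eq_comm]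

end

/-- **Jacobi identity ⟺ P·(rot P) = 0.**  For a smooth vector field P on ℝ³, the
bracket {f,g}_P = ⟨P, ∇f × ∇g⟩ satisfies the Jacobi identity for all smooth f, g, h
if and only if ⟨P(x), (curl P)(x)⟩ = 0 for every x. -/
theorem jacobi_iff_dot_curl_eq_zero
    (P : (Fin 3 → ℝ) → (Fin 3 → ℝ)) (hP : ContDiff ℝ ∞ P) :
    (∀ f g h : (Fin 3 → ℝ) → ℝ, ContDiff ℝ ∞ f → ContDiff ℝ ∞ g → ContDiff ℝ ∞ h →
      ∀ x, pb P (pb P f g) h x + pb P (pb P g h) f x + pb P (pb P h f) g x = 0) ↔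
    (∀ x, dot (P x) (curl P x) = 0) := by
  constructor
  · intro hJ x
    have hcoord : ∀ j : Fin 3, ContDiff ℝ ∞ fun y : Fin 3 → ℝ => y j := fun j =>
      contDiff_apply ℝ ℝ j
    simpa [pb_jacobiator_eq hP (hcoord 0) (hcoord 1) (hcoord 2), grad_eval, dot, cross,
      Fin.sum_univ_three] using hJ _ _ _ (hcoord 0) (hcoord 1) (hcoord 2) x
  · intro hPcurl f g h hf hg hh x
    rw [pb_jacobiator_eq hP hf hg hh, hPcurl x, zero_mul]

end
end

section
/- Let A be a commutative ℚ-algebra, k ≥ 2 an integer, and M₁, …, M_{k−1} : A × A → A additive bilinear maps satisfying the Weyl-type parity M_l(f,g) = (−1)^l M_l(g,f) for all f,g ∈ A and 1 ≤ l ≤ k−1. Define R_k = (1/2) Σ_{l=1}^{k−1} [M_l, M_{k−l}]. Then R_k(f,g,h) = −(−1)^k R_k(h,g,f) for all f,g,h ∈ A; in particular, if k is odd then R_k is symmetric under reversal of its arguments and its total antisymmetrization vanishes: Σ_{σ ∈ S₃} sgn(σ) R_k(x_{σ(1)}, x_{σ(2)}, x_{σ(3)}) = 0. -/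
/-!
Each `M_l` changes by the sign `(-1)^l` when its arguments are swapped, and, being additive,
lets such a sign pass through its second argument. Reversing the arguments of `[M_l, M_{k-l}]`
therefore exchanges its four terms in pairs, up to the common sign `-(-1)^l (-1)^(k-l) = -(-1)^k`.
For `k` odd, `R_k` is thus invariant under the transposition `(1 3)` of its arguments, which
pairs each term of the antisymmetrization with its negative.
-/

/-- Gerstenhaber bracket of two bilinear maps:
`[M,N](f,g,h) = M(N(f,g),h) − M(f,N(g,h)) + N(M(f,g),h) − N(f,M(g,h))`. -/
def gerstenhaber {A : Type*} [CommRing A] (M N : A → A → A) : A → A → A → A :=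
  fun f g h => M (N f g) h - M f (N g h) + N (M f g) h - N f (M g h)

theorem map_neg_one_pow_mul {A : Type*} [Ring A] {φ : A → A}
    (hφ : ∀ y z, φ (y + z) = φ y + φ z) (n : ℕ) (y : A) :
    φ ((-1) ^ n * y) = (-1) ^ n * φ y := by
  rcases neg_one_pow_eq_or A n with h | h
  · simp only [h, one_mul]
  · rw [h, neg_one_mul, neg_one_mul]
    exact map_neg (AddMonoidHom.mk' φ hφ) y

theorem gerstenhaber_reverse {A : Type*} [CommRing A] {M N : A → A → A} {a b : ℕ}
    (hM : ∀ f g, M f g = (-1) ^ a * M g f) (hN : ∀ f g, N f g = (-1) ^ b * N g f)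
    (hMadd : ∀ x y z, M x (y + z) = M x y + M x z)
    (hNadd : ∀ x y z, N x (y + z) = N x y + N x z) (f g h : A) :
    gerstenhaber M N f g h = -((-1) ^ (a + b) * gerstenhaber M N h g f) := by
  have t1 : M (N f g) h = (-1) ^ b * ((-1) ^ a * M h (N g f)) := by
    rw [hM, hN f g, map_neg_one_pow_mul (hMadd h)]; ring
  have t2 : M f (N g h) = (-1) ^ b * ((-1) ^ a * M (N h g) f) := by
    rw [hN g h, map_neg_one_pow_mul (hMadd f), hM f]
  have t3 : N (M f g) h = (-1) ^ a * ((-1) ^ b * N h (M g f)) := by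
    rw [hN, hM f g, map_neg_one_pow_mul (hNadd h)]; ring
  have t4 : N f (M g h) = (-1) ^ a * ((-1) ^ b * N (M h g) f) := by
    rw [hM g h, map_neg_one_pow_mul (hNadd f), hN f]
  simp only [gerstenhaber]
  rw [t1, t2, t3, t4, pow_add]
  ring

theorem sum_sign_smul_eq_zero_of_reverse {α B : Type*} [AddCommGroup B] {T : α → α → α → B}
    (hT : ∀ x y z, T x y z = T z y x) (v : Fin 3 → α) :
    ∑ σ : Equiv.Perm (Fin 3), (Equiv.Perm.sign σ : ℤ) • T (v (σ 0)) (v (σ 1)) (v (σ 2)) = 0 := by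
  set τ : Equiv.Perm (Fin 3) := Equiv.swap 0 2
  have hτ : τ 0 = 2 ∧ τ 1 = 1 ∧ τ 2 = 0 := by decide
  refine Finset.sum_involution (fun σ _ => σ * τ) (fun σ _ => ?_) (fun σ _ _ => ?_)
    (fun _ _ => Finset.mem_univ _) (fun σ _ => by simp [τ, mul_assoc])
  · have hsign : Equiv.Perm.sign (σ * τ) = -Equiv.Perm.sign σ := by
      rw [Equiv.Perm.sign_mul, Equiv.Perm.sign_swap (by decide), mul_neg_one]
    simp only [Equiv.Perm.mul_apply, hτ, hsign, Units.val_neg, neg_smul,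
      hT (v (σ 2))]
    exact add_neg_cancel _
  · exact mul_ne_left.mpr (by decide)

theorem Rk_parity_general {A : Type*} [CommRing A] [Algebra ℚ A] (k : ℕ)
    (M : ℕ → A → A → A)
    (haddr : ∀ l, 1 ≤ l → l ≤ k - 1 → ∀ x y z : A, M l x (y + z) = M l x y + M l x z)
    (hsym : ∀ l, 1 ≤ l → l ≤ k - 1 → ∀ f g : A, M l f g = (-1 : A) ^ l * M l g f)
    (R : A → A → A → A)
    (hR : ∀ f g h : A,
      R f g h = (1 / 2 : ℚ) • ∑ l ∈ Finset.Ico 1 k, gerstenhaber (M l) (M (k - l)) f g h) :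
    (∀ f g h : A, R f g h = -((-1 : A) ^ k * R h g f)) ∧
    (Odd k → ∀ f g h : A,
      ∑ σ : Equiv.Perm (Fin 3),
        (Equiv.Perm.sign σ : ℤ) • R (![f, g, h] (σ 0)) (![f, g, h] (σ 1)) (![f, g, h] (σ 2))
          = 0) := by
  have hterm : ∀ f g h, ∀ l ∈ Finset.Ico 1 k, gerstenhaber (M l) (M (k - l)) f g h
      = -((-1) ^ k * gerstenhaber (M l) (M (k - l)) h g f) := by
    intro f g h l hl
    obtain ⟨hl1, hlk⟩ := Finset.mem_Ico.mp hl
    rw [gerstenhaber_reverse (hsym l hl1 (by omega)) (hsym (k - l) (by omega) (by omega))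
      (haddr l hl1 (by omega)) (haddr (k - l) (by omega) (by omega)), Nat.add_sub_cancel' hlk.le]
  have hreverse : ∀ f g h, R f g h = -((-1 : A) ^ k * R h g f) := by
    intro f g h
    rw [hR, hR, Finset.sum_congr rfl (hterm f g h), Finset.sum_neg_distrib, ← Finset.mul_sum,
      smul_neg, mul_smul_comm]
  refine ⟨hreverse, fun hodd f g h => sum_sign_smul_eq_zero_of_reverse (fun x y z => ?_) _⟩
  rw [hreverse, hodd.neg_one_pow, neg_one_mul, neg_neg]

/-- **Parity of R_k for Weyl-type star products:** if the additive bilinear maps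
M₁, …, M_{k−1} satisfy the Weyl-type parity M_l(f,g) = (−1)^l M_l(g,f), then
R_k = (1/2)∑_{l=1}^{k−1} [M_l, M_{k−l}] satisfies R_k(f,g,h) = −(−1)^k R_k(h,g,f);
in particular for k odd, R_k is symmetric under reversal of its arguments and its
total antisymmetrization vanishes. -/
theorem Rk_parity {A : Type*} [CommRing A] [Algebra ℚ A] (k : ℕ) (hk : 2 ≤ k)
    (M : ℕ → A → A → A)
    (haddl : ∀ l, 1 ≤ l → l ≤ k - 1 → ∀ x y z : A, M l (x + y) z = M l x z + M l y z)
    (haddr : ∀ l, 1 ≤ l → l ≤ k - 1 → ∀ x y z : A, M l x (y + z) = M l x y + M l x z)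
    (hsym : ∀ l, 1 ≤ l → l ≤ k - 1 → ∀ f g : A, M l f g = (-1 : A) ^ l * M l g f)
    (R : A → A → A → A)
    (hR : ∀ f g h : A,
      R f g h = (1 / 2 : ℚ) • ∑ l ∈ Finset.Ico 1 k, gerstenhaber (M l) (M (k - l)) f g h) :
    (∀ f g h : A, R f g h = -((-1 : A) ^ k * R h g f)) ∧
    (Odd k → ∀ f g h : A,
      ∑ σ : Equiv.Perm (Fin 3),
        (Equiv.Perm.sign σ : ℤ) • R (![f, g, h] (σ 0)) (![f, g, h] (σ 1)) (![f, g, h] (σ 2))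
          = 0) :=
  Rk_parity_general k M haddr hsym R hR
end

section
/- Let A be a commutative ℚ-algebra, ε ∈ {1, −1}, and M : A × A → A an additive bilinear map whose Hochschild coboundary has pure reversal parity: δM(f,g,h) = −ε·δM(h,g,f) for all f,g,h ∈ A. Then the ε-symmetric part Mᵉ of M, defined by Mᵉ(f,g) = (1/2)(M(f,g) + ε·M(g,f)), satisfies δ(Mᵉ) = δM. Hence any solution M_k of the Hochschild equation δM_k = R_k with R_k of reversal parity −(−1)^k can be chosen with the Weyl-type symmetry M_k(f,g) = (−1)^k M_k(g,f). -/
/-!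
Transposing the arguments of `M` reverses and negates its coboundary,
`δ(M ∘ swap)(f,g,h) = −δM(h,g,f)`, and `δ` is linear in `M`. Hence
`δ(Mᵉ)(f,g,h) = ½(δM(f,g,h) − ε·δM(h,g,f))`, which is `δM(f,g,h)` under the parity hypothesis.
For `ε = (−1)^k` one has `ε² = 1`, which makes `Mᵉ` itself `ε`-symmetric.
-/

/-- Hochschild coboundary of a bilinear map:
`δM(f,g,h) = f·M(g,h) − M(f·g,h) + M(f,g·h) − M(f,g)·h`. -/
def hochschildδ₂ {A : Type*} [CommRing A] (M : A → A → A) : A → A → A → A :=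
  fun f g h => f * M g h - M (f * g) h + M f (g * h) - M f g * h

namespace hochschildδ₂

variable {A : Type*} [CommRing A]

theorem add (M N : A → A → A) (f g h : A) :
    hochschildδ₂ (fun f g => M f g + N f g) f g h
      = hochschildδ₂ M f g h + hochschildδ₂ N f g h := by
  simp only [hochschildδ₂]
  ring

theorem smul {R : Type*} [CommSemiring R] [Algebra R A] (r : R) (M : A → A → A) (f g h : A) :
    hochschildδ₂ (fun f g => r • M f g) f g h = r • hochschildδ₂ M f g h := by
  simp only [hochschildδ₂, smul_sub, smul_add, mul_smul_comm, smul_mul_assoc]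

theorem mul_left (a : A) (M : A → A → A) (f g h : A) :
    hochschildδ₂ (fun f g => a * M f g) f g h = a * hochschildδ₂ M f g h :=
  smul a M f g h

theorem swap (M : A → A → A) (f g h : A) :
    hochschildδ₂ (fun f g => M g f) f g h = -hochschildδ₂ M h g f := by
  simp only [hochschildδ₂, mul_comm g f, mul_comm h g]
  ring

end hochschildδ₂

def symmetricPart {A : Type*} [CommRing A] [Algebra ℚ A] (ε : A) (M : A → A → A) (f g : A) :
    A :=
  (1 / 2 : ℚ) • (M f g + ε * M g f)

theorem hochschildδ₂_symmetricPart {A : Type*} [CommRing A] [Algebra ℚ A] {ε : A}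
    {M : A → A → A} (hM : ∀ f g h : A, hochschildδ₂ M f g h = -(ε * hochschildδ₂ M h g f))
    (f g h : A) : hochschildδ₂ (symmetricPart ε M) f g h = hochschildδ₂ M f g h := by
  calc hochschildδ₂ (symmetricPart ε M) f g h
      = (1 / 2 : ℚ) • (hochschildδ₂ M f g h - ε * hochschildδ₂ M h g f) := by
        unfold symmetricPart
        rw [hochschildδ₂.smul, hochschildδ₂.add, hochschildδ₂.mul_left, hochschildδ₂.swap M,
          mul_neg, ← sub_eq_add_neg]
    _ = (1 / 2 : ℚ) • (2 : ℚ) • hochschildδ₂ M f g h := by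
        rw [← neg_eq_iff_eq_neg.mpr (hM f g h), sub_neg_eq_add, two_smul]
    _ = hochschildδ₂ M f g h := by
        rw [smul_smul]
        norm_num

theorem symmetricPart_eq_mul_symmetricPart {A : Type*} [CommRing A] [Algebra ℚ A] {ε : A}
    (hε : ε * ε = 1) (M : A → A → A) (f g : A) :
    symmetricPart ε M f g = ε * symmetricPart ε M g f := by
  rw [symmetricPart, symmetricPart, mul_smul_comm, mul_add, ← mul_assoc, hε, one_mul,
    add_comm]

theorem hochschildδ_symmetric_part_general {A : Type*} [CommRing A] [Algebra ℚ A]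
    (ε : A) (M : A → A → A)
    (hδparity : ∀ f g h : A, hochschildδ₂ M f g h = -(ε * hochschildδ₂ M h g f)) :
    (∀ f g h : A,
      hochschildδ₂ (fun f g => (1 / 2 : ℚ) • (M f g + ε * M g f)) f g h
        = hochschildδ₂ M f g h) ∧
    (∀ (k : ℕ) (R : A → A → A → A),
      (∀ f g h : A, R f g h = -((-1 : A) ^ k * R h g f)) →
      (∀ f g h : A, hochschildδ₂ M f g h = R f g h) →
      ∃ M' : A → A → A,
        (∀ f g h : A, hochschildδ₂ M' f g h = R f g h) ∧
        (∀ f g : A, M' f g = (-1 : A) ^ k * M' g f)) := by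
  refine ⟨hochschildδ₂_symmetricPart hδparity, fun k R hR hMR => ?_⟩
  have hsign : (-1 : A) ^ k * (-1) ^ k = 1 := by
    rw [← mul_pow, neg_one_mul, neg_neg, one_pow]
  have hMparity : ∀ f g h : A, hochschildδ₂ M f g h = -((-1) ^ k * hochschildδ₂ M h g f) :=
    fun f g h => by rw [hMR, hMR, hR]
  exact ⟨symmetricPart ((-1) ^ k) M,
    fun f g h => (hochschildδ₂_symmetricPart hMparity f g h).trans (hMR f g h),
    symmetricPart_eq_mul_symmetricPart hsign M⟩

/-- **The ε-symmetric part has the same Hochschild coboundary:** if ε ∈ {1,−1} and the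
additive bilinear map M has δM(f,g,h) = −ε·δM(h,g,f), then
Mᵉ(f,g) = (1/2)(M(f,g) + ε·M(g,f)) satisfies δ(Mᵉ) = δM.  Hence any solution M_k of
δM_k = R_k with R_k of reversal parity −(−1)^k can be chosen with the Weyl-type
symmetry M_k(f,g) = (−1)^k M_k(g,f). -/
theorem hochschildδ_symmetric_part {A : Type*} [CommRing A] [Algebra ℚ A]
    (ε : A) (hε : ε = 1 ∨ ε = -1) (M : A → A → A)
    (haddl : ∀ a b c : A, M (a + b) c = M a c + M b c)
    (haddr : ∀ a b c : A, M a (b + c) = M a b + M a c)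
    (hδparity : ∀ f g h : A, hochschildδ₂ M f g h = -(ε * hochschildδ₂ M h g f)) :
    (∀ f g h : A,
      hochschildδ₂ (fun f g => (1 / 2 : ℚ) • (M f g + ε * M g f)) f g h
        = hochschildδ₂ M f g h) ∧
    (∀ (k : ℕ) (R : A → A → A → A),
      (∀ f g h : A, R f g h = -((-1 : A) ^ k * R h g f)) →
      (∀ f g h : A, hochschildδ₂ M f g h = R f g h) →
      ∃ M' : A → A → A,
        (∀ f g h : A, hochschildδ₂ M' f g h = R f g h) ∧
        (∀ f g : A, M' f g = (-1 : A) ^ k * M' g f)) :=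
  hochschildδ_symmetric_part_general ε M hδparity
end
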